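/- arXiv:1404.5001 — 12 statements merged into one kernel-verified Lean document; each statement's English description precedes it below -/
import Mathlib

section
/- Let J be a 3-dimensional nilpotent commutative ℝ-algebra with basis {n₁, n₂, n₃} and multiplication determined by n₁² = α n₃, n₂² = β n₃, n₁·n₂ = γ n₃, n₃² = n₁·n₃ = n₂·n₃ = 0 with β ≠ 0 and γ² − αβ > 0. Then J is isomorphic to the algebra J₂₆ with basis {N₁, N₂, N₃} and multiplication N₁·N₂ = N₃ and all other products of basis elements zero. -/
/-! Both multiplications only see the symmetric bilinear form of the first two coordinates,
valued in the third. For J₂₆ this form is `x₁y₂ + x₂y₁`, so the problem is to write the form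
`αx₁y₁ + βx₂y₂ + γ(x₁y₂ + x₂y₁)` as `ℓ(x)m(y) + m(x)ℓ(y)` for independent linear forms `ℓ, m`,
i.e. to factor the quadratic form `αx₁² + 2γx₁x₂ + βx₂²` over ℝ. That is possible exactly because
its discriminant `γ² − αβ` is nonnegative, and `ℓ, m` are independent since the square of their
determinant is `γ² − αβ > 0`. -/

/-- Nilpotent commutative multiplication on ℝ³ with n₁² = α n₃, n₂² = β n₃,
n₁·n₂ = γ n₃, n₃² = n₁·n₃ = n₂·n₃ = 0, where n₁ = (1,0,0), n₂ = (0,1,0), n₃ = (0,0,1). -/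
def mulNil (α β γ : ℝ) (x y : ℝ × ℝ × ℝ) : ℝ × ℝ × ℝ :=
  (0, 0, α * (x.1 * y.1) + β * (x.2.1 * y.2.1) + γ * (x.1 * y.2.1 + x.2.1 * y.1))

/-- Multiplication of J₂₆: n₁·n₂ = n₂·n₁ = n₃, all other basis products zero. -/
def mulJ26 (x y : ℝ × ℝ × ℝ) : ℝ × ℝ × ℝ :=
  (0, 0, x.1 * y.2.1 + x.2.1 * y.1)

noncomputable def fstSndEquiv (a b c d : ℝ) (h : a * d - b * c ≠ 0) :
    (ℝ × ℝ × ℝ) ≃ₗ[ℝ] (ℝ × ℝ × ℝ) where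
  toFun x := (a * x.1 + b * x.2.1, c * x.1 + d * x.2.1, x.2.2)
  invFun y := ((a * d - b * c)⁻¹ * (d * y.1 - b * y.2.1),
    (a * d - b * c)⁻¹ * (a * y.2.1 - c * y.1), y.2.2)
  map_add' x y := by
    ext <;> simp only [Prod.fst_add, Prod.snd_add] <;> ring
  map_smul' r x := by
    ext <;> simp only [Prod.smul_fst, Prod.smul_snd, smul_eq_mul, RingHom.id_apply] <;> ring
  left_inv x := by
    ext
    · linear_combination x.1 * inv_mul_cancel₀ h
    · linear_combination x.2.1 * inv_mul_cancel₀ h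
    · rfl
  right_inv y := by
    ext
    · linear_combination y.1 * inv_mul_cancel₀ h
    · linear_combination y.2.1 * inv_mul_cancel₀ h
    · rfl

theorem fstSndEquiv_mulNil {a b c d : ℝ} (h : a * d - b * c ≠ 0) (x y : ℝ × ℝ × ℝ) :
    fstSndEquiv a b c d h (mulNil (2 * a * c) (2 * b * d) (a * d + b * c) x y) =
      mulJ26 (fstSndEquiv a b c d h x) (fstSndEquiv a b c d h y) := by
  simp only [fstSndEquiv, mulNil, mulJ26, LinearEquiv.coe_mk, LinearMap.coe_mk, AddHom.coe_mk,
    mul_zero, add_zero]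
  congr 2
  ring

theorem exists_factorization_of_discrim_nonneg {α β γ : ℝ} (hβ : β ≠ 0)
    (hΔ : 0 ≤ γ ^ 2 - α * β) :
    ∃ a b c d : ℝ, 2 * a * c = α ∧ 2 * b * d = β ∧ a * d + b * c = γ := by
  set s := √(γ ^ 2 - α * β)
  have hs : s ^ 2 = γ ^ 2 - α * β := Real.sq_sqrt hΔ
  -- `β (αx² + 2γxy + βy²) = ((γ + s)x + βy)((γ - s)x + βy)`
  refine ⟨(γ + s) / β, 1, (γ - s) / 2, β / 2, ?_, by ring, by field_simp; ring⟩
  field_simp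
  linear_combination -hs

/-- if β ≠ 0 and γ² − αβ > 0 then the nilpotent algebra with
n₁² = α n₃, n₂² = β n₃, n₁·n₂ = γ n₃ is isomorphic to J₂₆. -/
theorem nilpotent_iso_J26 (α β γ : ℝ) (hβ : β ≠ 0) (hΔ : γ ^ 2 - α * β > 0) :
    ∃ φ : (ℝ × ℝ × ℝ) ≃ₗ[ℝ] (ℝ × ℝ × ℝ),
      ∀ x y : ℝ × ℝ × ℝ, φ (mulNil α β γ x y) = mulJ26 (φ x) (φ y) := by
  obtain ⟨a, b, c, d, rfl, rfl, rfl⟩ := exists_factorization_of_discrim_nonneg hβ hΔ.le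
  have hsq : (a * d - b * c) ^ 2 = (a * d + b * c) ^ 2 - 2 * a * c * (2 * b * d) := by ring
  have hdet : a * d - b * c ≠ 0 := (pow_ne_zero_iff two_ne_zero).mp (hsq ▸ hΔ.ne')
  exact ⟨fstSndEquiv a b c d hdet, fstSndEquiv_mulNil hdet⟩
end

section
/- Let J be a 3-dimensional nilpotent commutative ℝ-algebra with basis {n₁, n₂, n₃} and multiplication n₁² = α n₃, n₂² = β n₃, n₁·n₂ = γ n₃, all other products of basis elements zero, with β ≠ 0 and γ² − αβ < 0. Then J is isomorphic to the algebra J₂₄ with multiplication N₁² = N₂² = N₃ and all other products zero. -/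
/-- Multiplication of J₂₄: n₁² = n₂² = n₃, all other basis products zero. -/
def mulJ24 (x y : ℝ × ℝ × ℝ) : ℝ × ℝ × ℝ :=
  (0, 0, x.1 * y.1 + x.2.1 * y.2.1)

/-!
Since `γ² − αβ < 0` and `β ≠ 0`, the form `q(x) = αx₁² + 2γx₁x₂ + βx₂²` is definite, and completing
the square with `s = √(αβ − γ²)` gives `β q(x) = (s x₁)² + (γ x₁ + β x₂)²`. Dividing these two new
coordinates and `x₃` by `β` turns the multiplication of `J` into that of `J₂₄`.
-/

noncomputable def toJ24Coords (β γ s : ℝ) : (ℝ × ℝ × ℝ) →ₗ[ℝ] ℝ × ℝ × ℝ where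
  toFun x := (s * x.1 / β, (γ * x.1 + β * x.2.1) / β, x.2.2 / β)
  map_add' x y := by ext <;> simp only [Prod.fst_add, Prod.snd_add] <;> ring
  map_smul' c x := by
    ext <;> simp only [Prod.smul_fst, Prod.smul_snd, smul_eq_mul, RingHom.id_apply] <;> ring

theorem toJ24Coords_injective {β γ s : ℝ} (hβ : β ≠ 0) (hs : s ≠ 0) :
    Function.Injective (toJ24Coords β γ s) := by
  refine (injective_iff_map_eq_zero _).mpr fun x hx => ?_
  simp only [toJ24Coords, LinearMap.coe_mk, AddHom.coe_mk, Prod.mk_eq_zero, div_eq_zero_iff,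
    mul_eq_zero, hβ, hs, or_false, false_or] at hx
  obtain ⟨hx₁, hx₂, hx₃⟩ := hx
  simp only [hx₁, mul_zero, zero_add, mul_eq_zero, hβ, false_or] at hx₂
  exact Prod.ext hx₁ (Prod.ext hx₂ hx₃)

theorem toJ24Coords_mulNil {α β γ s : ℝ} (hβ : β ≠ 0) (hs : s ^ 2 = α * β - γ ^ 2)
    (x y : ℝ × ℝ × ℝ) :
    toJ24Coords β γ s (mulNil α β γ x y) =
      mulJ24 (toJ24Coords β γ s x) (toJ24Coords β γ s y) := by
  simp only [toJ24Coords, mulNil, mulJ24, LinearMap.coe_mk, AddHom.coe_mk, mul_zero, add_zero,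
    zero_div]
  congr 2
  field_simp
  linear_combination -x.1 * y.1 * hs

/-- if β ≠ 0 and γ² − αβ < 0 then the nilpotent algebra with
n₁² = α n₃, n₂² = β n₃, n₁·n₂ = γ n₃ is isomorphic to J₂₄. -/
theorem nilpotent_iso_J24 (α β γ : ℝ) (hβ : β ≠ 0) (hΔ : γ ^ 2 - α * β < 0) :
    ∃ φ : (ℝ × ℝ × ℝ) ≃ₗ[ℝ] (ℝ × ℝ × ℝ),
      ∀ x y : ℝ × ℝ × ℝ, φ (mulNil α β γ x y) = mulJ24 (φ x) (φ y) := by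
  have hdisc : 0 < α * β - γ ^ 2 := by linarith
  obtain ⟨s, hs₀, hs⟩ : ∃ s : ℝ, s ≠ 0 ∧ s ^ 2 = α * β - γ ^ 2 :=
    ⟨√(α * β - γ ^ 2), (Real.sqrt_pos.mpr hdisc).ne', Real.sq_sqrt hdisc.le⟩
  exact ⟨LinearEquiv.ofInjectiveEndo _ (toJ24Coords_injective hβ hs₀),
    toJ24Coords_mulNil hβ hs⟩
end

section
/- The 3-dimensional real commutative algebras J₂₄ (with multiplication n₁² = n₂² = n₃ and all other basis products zero) and J₂₆ (with multiplication n₁·n₂ = n₃ and all other basis products zero) are not isomorphic. -/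
/-- the real algebras J₂₄ and J₂₆ are not isomorphic. -/
theorem J24_not_iso_J26 :
    ¬ ∃ φ : (ℝ × ℝ × ℝ) ≃ₗ[ℝ] (ℝ × ℝ × ℝ),
      ∀ x y : ℝ × ℝ × ℝ, φ (mulJ24 x y) = mulJ26 (φ x) (φ y) := by
  rintro ⟨φ, hφ⟩
  set x : ℝ × ℝ × ℝ := φ.symm (1, 0, 0) with hx
  set y : ℝ × ℝ × ℝ := φ.symm (0, 1, 0) with hy
  have hφx : φ x = (1, 0, 0) := φ.apply_symm_apply _
  have hφy : φ y = (0, 1, 0) := φ.apply_symm_apply _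
  -- x² = 0 in J24
  have hx2 : mulJ24 x x = 0 := by
    apply φ.injective
    rw [hφ, hφx, map_zero]
    simp [mulJ26]
  have hy2 : mulJ24 y y = 0 := by
    apply φ.injective
    rw [hφ, hφy, map_zero]
    simp [mulJ26]
  have hx1 : x.1 = 0 ∧ x.2.1 = 0 := by
    have h : x.1 * x.1 + x.2.1 * x.2.1 = 0 := by
      have := congrArg (fun p : ℝ × ℝ × ℝ => p.2.2) hx2
      simpa [mulJ24] using this
    constructor <;> nlinarith [sq_nonneg x.1, sq_nonneg x.2.1]
  have hy1 : y.1 = 0 ∧ y.2.1 = 0 := by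
    have h : y.1 * y.1 + y.2.1 * y.2.1 = 0 := by
      have := congrArg (fun p : ℝ × ℝ × ℝ => p.2.2) hy2
      simpa [mulJ24] using this
    constructor <;> nlinarith [sq_nonneg y.1, sq_nonneg y.2.1]
  -- x and y are both multiples of n₃, hence dependent
  have hdep : y.2.2 • x - x.2.2 • y = 0 := by
    obtain ⟨hx1a, hx1b⟩ := hx1
    obtain ⟨hy1a, hy1b⟩ := hy1
    have : x = (0, 0, x.2.2) := by
      ext <;> simp [hx1a, hx1b]
    have hyeq : y = (0, 0, y.2.2) := by
      ext <;> simp [hy1a, hy1b]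
    rw [this, hyeq]
    ext <;> simp [mul_comm]
  have := congrArg φ hdep
  rw [map_sub, map_smul, map_smul, hφx, hφy, map_zero] at this
  have h1 : y.2.2 = 0 := by
    have := congrArg (fun p : ℝ × ℝ × ℝ => p.1) this
    simpa using this
  have hx0 : x = 0 := by
    obtain ⟨hx1a, hx1b⟩ := hx1
    obtain ⟨hy1a, hy1b⟩ := hy1
    have h2 : x.2.2 = 0 := by
      have := congrArg (fun p : ℝ × ℝ × ℝ => p.2.1) this
      simpa using this
    ext <;> simp [hx1a, hx1b, h2]
  rw [hx0, map_zero] at hφx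
  exact one_ne_zero (congrArg (fun p : ℝ × ℝ × ℝ => p.1) hφx).symm
end

section
/- Let J be a 3-dimensional nilpotent commutative Jordan algebra over ℝ with dim J³ = 1 and dim J² = 2 (nilpotency type (1,1,1)). Then there exists n ∈ J such that {n, n², n³} is a basis of J, i.e., J is generated by a single element; consequently J is isomorphic to the algebra J₂₃ with basis {n₁,n₂,n₃} and multiplication n₂·n₃ = n₁, n₃² = n₂, all other products of basis elements zero. -/
/-- Multiplication of J₂₃: n₂·n₃ = n₁, n₃² = n₂, all other basis products zero. -/
def mulJ23 (x y : ℝ × ℝ × ℝ) : ℝ × ℝ × ℝ :=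
  (x.2.1 * y.2.2 + x.2.2 * y.2.1, x.2.2 * y.2.2, 0)

/-- a 3-dimensional nilpotent commutative real Jordan algebra of
nilpotency type (1,1,1) (dim J² = 2, dim J³ = 1, J⁽⁴⁾ = 0) is generated by one
element n (so that {n, n², n³} is a basis) and is isomorphic to J₂₃. -/
theorem nilpotent_type_111
    {J : Type*} [AddCommGroup J] [Module ℝ J] [FiniteDimensional ℝ J]
    (mul : J →ₗ[ℝ] J →ₗ[ℝ] J)
    (comm : ∀ x y : J, mul x y = mul y x)
    (jordan : ∀ x y : J, mul (mul (mul x x) y) x = mul (mul x x) (mul y x))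
    (hdim : Module.finrank ℝ J = 3)
    (hJ2 : Module.finrank ℝ ↥(Submodule.span ℝ {z : J | ∃ x y, z = mul x y}) = 2)
    (hJ3 : Module.finrank ℝ
      ↥(Submodule.span ℝ {z : J | ∃ x y w, z = mul (mul x y) w}) = 1)
    (hnil : ∀ x y w v : J, mul (mul (mul x y) w) v = 0) :
    (∃ n : J, LinearIndependent ℝ ![n, mul n n, mul (mul n n) n] ∧
      Submodule.span ℝ {n, mul n n, mul (mul n n) n} = ⊤) ∧
    (∃ φ : J ≃ₗ[ℝ] (ℝ × ℝ × ℝ),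
      ∀ x y : J, φ (mul x y) = mulJ23 (φ x) (φ y)) := by
  classical
  set J2 : Submodule ℝ J := Submodule.span ℝ {z : J | ∃ x y, z = mul x y} with hJ2def
  set J3 : Submodule ℝ J :=
    Submodule.span ℝ {z : J | ∃ x y w, z = mul (mul x y) w} with hJ3def
  -- elements of J3 annihilate everything
  have h3mul : ∀ j ∈ J3, ∀ z : J, mul j z = 0 := by
    intro j hj z
    have hle : J3 ≤ LinearMap.ker ((LinearMap.flip mul) z) := by
      rw [hJ3def]
      apply Submodule.span_le.mpr
      rintro w ⟨x, y, v, rfl⟩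
      simp only [SetLike.mem_coe, LinearMap.mem_ker, LinearMap.flip_apply]
      exact hnil x y v z
    simpa using hle hj
  -- squares of squares vanish
  have hsq22 : ∀ x : J, mul (mul x x) (mul x x) = 0 := by
    intro x
    have h := jordan x x
    rw [hnil x x x x] at h
    exact h.symm
  -- Step 1: there is an element with nonzero cube
  have hexn : ∃ n : J, mul (mul n n) n ≠ 0 := by
    by_contra hno
    push_neg at hno
    -- polarized identity (A): (xx)y = -2 (xy)x
    have hA : ∀ x y : J, mul (mul x x) y + (2:ℝ) • mul (mul x y) x = 0 := by
      intro x y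
      have h1 := hno (x + y)
      have h2 := hno (x - y)
      simp only [map_add, map_sub, LinearMap.add_apply, LinearMap.sub_apply] at h1 h2
      rw [comm y x] at h1 h2
      linear_combination (norm := module) ((1:ℝ)/2) • h1 - ((1:ℝ)/2) • h2 - hno y
    -- some square is not in J3
    have hsqJ3 : ¬ ∀ x : J, mul x x ∈ J3 := by
      intro hall
      have hle : J2 ≤ J3 := by
        rw [hJ2def]
        apply Submodule.span_le.mpr
        rintro w ⟨x, y, rfl⟩
        have hxy : mul x y =
            ((1:ℝ)/2) • (mul (x + y) (x + y) - mul x x - mul y y) := by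
          simp only [map_add, LinearMap.add_apply]
          rw [comm y x]
          module
        rw [SetLike.mem_coe, hxy]
        exact Submodule.smul_mem _ _ (Submodule.sub_mem _
          (Submodule.sub_mem _ (hall _) (hall _)) (hall _))
      have := Submodule.finrank_mono hle
      rw [hJ2, hJ3] at this
      omega
    push_neg at hsqJ3
    obtain ⟨n₀, hq⟩ := hsqJ3
    have hqJ2 : mul n₀ n₀ ∈ J2 := Submodule.subset_span ⟨n₀, n₀, rfl⟩
    have hJ3le : J3 ≤ J2 := by
      rw [hJ3def, hJ2def]
      apply Submodule.span_le.mpr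
      rintro w ⟨x, y, v, rfl⟩
      exact Submodule.subset_span ⟨mul x y, v, rfl⟩
    have hple : J3 ⊔ Submodule.span ℝ {mul n₀ n₀} ≤ J2 :=
      sup_le hJ3le (by rwa [Submodule.span_singleton_le_iff_mem])
    have hlt : J3 < J3 ⊔ Submodule.span ℝ {mul n₀ n₀} := by
      refine lt_of_le_of_ne le_sup_left ?_
      intro hEq
      apply hq
      rw [hEq]
      exact Submodule.mem_sup_right (Submodule.mem_span_singleton_self _)
    have heq : J3 ⊔ Submodule.span ℝ {mul n₀ n₀} = J2 := by
      apply Submodule.eq_of_le_of_finrank_le hple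
      have hlt' := Submodule.finrank_lt_finrank_of_lt hlt
      rw [hJ3] at hlt'
      rw [hJ2]
      omega
    -- (mul n₀ n₀) · z = 0 for all z
    have hqz : ∀ z : J, mul (mul n₀ n₀) z = 0 := by
      intro z
      have hmem : mul n₀ z ∈ J2 := Submodule.subset_span ⟨n₀, z, rfl⟩
      rw [← heq] at hmem
      obtain ⟨j, hj, w, hw, hjw⟩ := Submodule.mem_sup.mp hmem
      obtain ⟨c, rfl⟩ := Submodule.mem_span_singleton.mp hw
      have h1 : mul (mul n₀ z) n₀ = 0 := by
        rw [← hjw]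
        simp only [map_add, map_smul, LinearMap.add_apply, LinearMap.smul_apply]
        rw [h3mul j hj n₀, hno n₀]
        simp
      have h2 := hA n₀ z
      rw [h1] at h2
      simpa using h2
    -- so all triple products vanish, contradicting dim J3 = 1
    have hJ3bot : J3 ≤ ⊥ := by
      rw [hJ3def]
      apply Submodule.span_le.mpr
      rintro w ⟨x, y, v, rfl⟩
      have hmem : mul x y ∈ J2 := Submodule.subset_span ⟨x, y, rfl⟩
      rw [← heq] at hmem
      obtain ⟨j, hj, w', hw', hjw⟩ := Submodule.mem_sup.mp hmem
      obtain ⟨c, rfl⟩ := Submodule.mem_span_singleton.mp hw'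
      simp only [SetLike.mem_coe, Submodule.mem_bot]
      rw [← hjw]
      simp only [map_add, map_smul, LinearMap.add_apply, LinearMap.smul_apply]
      rw [h3mul j hj v, hqz v]
      simp
    have hb : Module.finrank ℝ J3 = 0 := by
      rw [le_bot_iff.mp hJ3bot]
      exact finrank_bot ℝ J
    rw [hJ3] at hb
    omega
  obtain ⟨n, hn3⟩ := hexn
  -- key linear-independence computation
  have h3z : ∀ z : J, mul (mul (mul n n) n) z = 0 := fun z => hnil n n n z
  have hkey : ∀ a b c : ℝ,
      a • (mul (mul n n) n) + b • (mul n n) + c • n = 0 →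
      a = 0 ∧ b = 0 ∧ c = 0 := by
    intro a b c h
    have h1 : b • (mul (mul n n) n) + c • (mul n n) = 0 := by
      have h' := congrArg (fun z => mul z n) h
      simp only [map_add, map_smul, LinearMap.add_apply, LinearMap.smul_apply,
        map_zero, LinearMap.zero_apply] at h'
      rw [hnil n n n n] at h'
      rw [← h']
      module
    have h2 : c • (mul (mul n n) n) = 0 := by
      have h' := congrArg (fun z => mul z n) h1
      simp only [map_add, map_smul, LinearMap.add_apply, LinearMap.smul_apply,
        map_zero, LinearMap.zero_apply] at h'
      rw [hnil n n n n] at h'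
      rw [← h']
      module
    have hc : c = 0 := by
      rcases smul_eq_zero.mp h2 with hc | hbad
      · exact hc
      · exact absurd hbad hn3
    subst hc
    simp only [zero_smul, add_zero] at h1 h
    have hb : b = 0 := by
      rcases smul_eq_zero.mp h1 with hb | hbad
      · exact hb
      · exact absurd hbad hn3
    subst hb
    simp only [zero_smul, add_zero] at h
    have ha : a = 0 := by
      rcases smul_eq_zero.mp h with ha | hbad
      · exact ha
      · exact absurd hbad hn3
    exact ⟨ha, rfl, rfl⟩
  have hli : LinearIndependent ℝ ![n, mul n n, mul (mul n n) n] := by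
    rw [Fintype.linearIndependent_iff]
    intro g hg
    rw [Fin.sum_univ_three] at hg
    simp only [Matrix.cons_val_zero, Matrix.cons_val_one, Matrix.head_cons,
      Matrix.cons_val_two, Matrix.tail_cons] at hg
    obtain ⟨h2', h1', h0'⟩ := hkey (g 2) (g 1) (g 0)
      (by linear_combination (norm := module) hg)
    intro i
    fin_cases i <;> assumption
  have hrange : Set.range ![n, mul n n, mul (mul n n) n] =
      {n, mul n n, mul (mul n n) n} := by
    ext z
    constructor
    · rintro ⟨i, rfl⟩
      fin_cases i <;> simp
    · rintro (rfl | rfl | rfl)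
      · exact ⟨0, rfl⟩
      · exact ⟨1, rfl⟩
      · exact ⟨2, rfl⟩
  have hspan : Submodule.span ℝ {n, mul n n, mul (mul n n) n} = ⊤ := by
    rw [← hrange]
    exact hli.span_eq_top_of_card_eq_finrank (by simp [hdim])
  refine ⟨⟨n, hli, hspan⟩, ?_⟩
  -- construct the isomorphism
  let ψ : (ℝ × ℝ × ℝ) →ₗ[ℝ] J :=
    { toFun := fun p => p.1 • (mul (mul n n) n) + p.2.1 • (mul n n) + p.2.2 • n
      map_add' := by
        intro p q
        simp only [Prod.fst_add, Prod.snd_add]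
        module
      map_smul' := by
        intro c p
        simp only [Prod.smul_fst, Prod.smul_snd, RingHom.id_apply, smul_eq_mul]
        module }
  have hψ : ∀ p : ℝ × ℝ × ℝ,
      ψ p = p.1 • (mul (mul n n) n) + p.2.1 • (mul n n) + p.2.2 • n := fun p => rfl
  have hinj : Function.Injective ψ := by
    rintro ⟨a, b, c⟩ ⟨a', b', c'⟩ hpq
    rw [hψ, hψ] at hpq
    have h0 : (a - a') • (mul (mul n n) n) + (b - b') • (mul n n) + (c - c') • n = 0 := by
      linear_combination (norm := module) hpq
    obtain ⟨h1, h2, h3⟩ := hkey _ _ _ h0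
    have haa : a = a' := by linarith [sub_eq_zero.mp h1]
    have hbb : b = b' := by linarith [sub_eq_zero.mp h2]
    have hcc : c = c' := by linarith [sub_eq_zero.mp h3]
    simp only [haa, hbb, hcc]
  have hsurj : Function.Surjective ψ := by
    intro x
    have hx : x ∈ Submodule.span ℝ (Set.range ![n, mul n n, mul (mul n n) n]) := by
      rw [hrange, hspan]; trivial
    rw [Submodule.mem_span_range_iff_exists_fun] at hx
    obtain ⟨c, hc⟩ := hx
    refine ⟨(c 2, c 1, c 0), ?_⟩
    rw [hψ]
    rw [Fin.sum_univ_three] at hc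
    simp only [Matrix.cons_val_zero, Matrix.cons_val_one, Matrix.head_cons,
      Matrix.cons_val_two, Matrix.tail_cons] at hc
    linear_combination (norm := module) hc
  have hmm : ∀ u v : ℝ × ℝ × ℝ, mul (ψ u) (ψ v) = ψ (mulJ23 u v) := by
    rintro ⟨a, b, c⟩ ⟨a', b', c'⟩
    rw [hψ, hψ, hψ]
    simp only [mulJ23]
    simp only [map_add, map_smul, LinearMap.add_apply, LinearMap.smul_apply]
    rw [comm (mul n n) (mul (mul n n) n), comm n (mul (mul n n) n),
      comm n (mul n n)]
    simp only [h3z, hsq22 n]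
    simp only [smul_zero, zero_add, add_zero]
    module
  let e := LinearEquiv.ofBijective ψ ⟨hinj, hsurj⟩
  refine ⟨e.symm, ?_⟩
  intro x y
  have h1x : ψ (e.symm x) = x := e.apply_symm_apply x
  have h1y : ψ (e.symm y) = y := e.apply_symm_apply y
  conv_lhs => rw [← h1x, ← h1y, hmm]
  exact e.symm_apply_apply _
end

section
/- For the 3-dimensional real Jordan algebra J₁₂ with basis {e₁, n₁, n₂} and multiplication e₁² = e₁, e₁·nᵢ = (1/2)nᵢ (i = 1,2), nᵢ·nⱼ = 0, every symmetric bilinear 2-cocycle h : J₁₂ × J₁₂ → J₁₂ is a coboundary; that is, the second Jordan cohomology group H²(J₁₂, J₁₂) vanishes. -/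
/-- Multiplication of J₁₂ on ℝ³ with basis e₁ = (1,0,0), n₁ = (0,1,0), n₂ = (0,0,1):
e₁² = e₁, e₁·nᵢ = (1/2)nᵢ, nᵢ·nⱼ = 0. -/
noncomputable def mulJ12 (x y : ℝ × ℝ × ℝ) : ℝ × ℝ × ℝ :=
  (x.1 * y.1, (x.1 * y.2.1 + x.2.1 * y.1) / 2, (x.1 * y.2.2 + x.2.2 * y.1) / 2)

/-!
A symmetric bilinear `h` is determined by its six values on pairs of basis vectors, eighteen
real coordinates. Already the cocycle identity with `b = e₁` suffices: for `a = x e₁ + y n₁ + z n₂`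
its `n₁`- and `n₂`-components are cubic forms in `(x, y, z)` whose coefficients are linear in
those coordinates, and their vanishing leaves a three-parameter family. That family is exactly
the coboundaries of the maps `μ x = φ(x) e₁` with `φ` a linear functional.
-/

section SymmetricBilinear

variable {R M : Type*} [CommSemiring R] [AddCommMonoid M] [Module R M]

theorem LinearMap.apply_eq_of_symm_prod3 (h : (R × R × R) →ₗ[R] (R × R × R) →ₗ[R] M)
    (hsymm : ∀ a b, h a b = h b a) (x y : R × R × R) :
    h x y = (x.1 * y.1) • h (1, 0, 0) (1, 0, 0) +
      (x.1 * y.2.1 + x.2.1 * y.1) • h (1, 0, 0) (0, 1, 0) +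
      (x.1 * y.2.2 + x.2.2 * y.1) • h (1, 0, 0) (0, 0, 1) +
      (x.2.1 * y.2.1) • h (0, 1, 0) (0, 1, 0) +
      (x.2.1 * y.2.2 + x.2.2 * y.2.1) • h (0, 1, 0) (0, 0, 1) +
      (x.2.2 * y.2.2) • h (0, 0, 1) (0, 0, 1) := by
  have decomp : ∀ v : R × R × R,
      v = v.1 • ((1 : R), (0 : R), (0 : R)) + v.2.1 • (0, 1, 0) + v.2.2 • (0, 0, 1) := by
    intro v; ext <;> simp
  conv_lhs => rw [decomp x, decomp y]
  simp only [map_add, map_smul, LinearMap.add_apply, LinearMap.smul_apply]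
  rw [hsymm (0, 1, 0) (1, 0, 0), hsymm (0, 0, 1) (1, 0, 0), hsymm (0, 0, 1) (0, 1, 0)]
  module

end SymmetricBilinear

namespace J12

local notation "e₁" => ((1, 0, 0) : ℝ × ℝ × ℝ)
local notation "n₁" => ((0, 1, 0) : ℝ × ℝ × ℝ)
local notation "n₂" => ((0, 0, 1) : ℝ × ℝ × ℝ)

def IsCocycle (h : (ℝ × ℝ × ℝ) →ₗ[ℝ] (ℝ × ℝ × ℝ) →ₗ[ℝ] (ℝ × ℝ × ℝ)) : Prop :=
  ∀ a b : ℝ × ℝ × ℝ,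
    mulJ12 (mulJ12 (h a a) b) a + mulJ12 (h (mulJ12 a a) b) a + h (mulJ12 (mulJ12 a a) b) a =
      mulJ12 (mulJ12 a a) (h b a) + mulJ12 (h a a) (mulJ12 b a) + h (mulJ12 a a) (mulJ12 b a)

variable {h : (ℝ × ℝ × ℝ) →ₗ[ℝ] (ℝ × ℝ × ℝ) →ₗ[ℝ] (ℝ × ℝ × ℝ)}

theorem IsCocycle.cubic_eqs_at_unit (hsymm : ∀ a b, h a b = h b a) (hh : IsCocycle h)
    (x y z : ℝ) :
    let A := h e₁ e₁
    let B := h e₁ n₁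
    let C := h e₁ n₂
    let D := h n₁ n₁
    let E := h n₁ n₂
    let F := h n₂ n₂;
    -A.2.1 * x ^ 3 + (A.1 - 2 * B.2.1) * x ^ 2 * y - 2 * C.2.1 * x ^ 2 * z +
        (2 * B.1 - D.2.1) * x * y ^ 2 + 2 * (C.1 - E.2.1) * x * y * z - F.2.1 * x * z ^ 2 +
        D.1 * y ^ 3 + 2 * E.1 * y ^ 2 * z + F.1 * y * z ^ 2 = 0 ∧
    -A.2.2 * x ^ 3 - 2 * B.2.2 * x ^ 2 * y + (A.1 - 2 * C.2.2) * x ^ 2 * z -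
        D.2.2 * x * y ^ 2 + 2 * (B.1 - E.2.2) * x * y * z + (2 * C.1 - F.2.2) * x * z ^ 2 +
        D.1 * y ^ 2 * z + 2 * E.1 * y * z ^ 2 + F.1 * z ^ 3 = 0 := by
  intro A B C D E F
  have expand : ∀ u v, h u v = (u.1 * v.1) • A + (u.1 * v.2.1 + u.2.1 * v.1) • B +
      (u.1 * v.2.2 + u.2.2 * v.1) • C + (u.2.1 * v.2.1) • D +
      (u.2.1 * v.2.2 + u.2.2 * v.2.1) • E + (u.2.2 * v.2.2) • F :=
    h.apply_eq_of_symm_prod3 hsymm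
  have identity := hh (x, y, z) e₁
  clear_value A B C D E F
  simp only [mulJ12, expand, Prod.ext_iff, Prod.fst_add, Prod.snd_add, Prod.smul_fst,
    Prod.smul_snd, smul_eq_mul] at identity
  obtain ⟨-, coord₂, coord₃⟩ := identity
  constructor
  · linear_combination 4 * coord₂
  · linear_combination 4 * coord₃

theorem IsCocycle.exists_basis_values (hsymm : ∀ a b, h a b = h b a) (hh : IsCocycle h) :
    ∃ p q r : ℝ, h e₁ e₁ = (2 * p, 0, 0) ∧ h e₁ n₁ = (q, p, 0) ∧ h e₁ n₂ = (r / 2, 0, p) ∧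
      h n₁ n₁ = (0, 2 * q, 0) ∧ h n₁ n₂ = (0, r / 2, q) ∧ h n₂ n₂ = (0, 0, r) := by
  have cubic := hh.cubic_eqs_at_unit hsymm
  obtain ⟨P₁, Q₁⟩ := cubic 1 0 0
  obtain ⟨P₂, -⟩ := cubic 0 1 0
  obtain ⟨-, Q₃⟩ := cubic 0 0 1
  obtain ⟨P₄, Q₄⟩ := cubic 1 1 0
  obtain ⟨P₅, Q₅⟩ := cubic 1 (-1) 0
  obtain ⟨P₆, Q₆⟩ := cubic 1 0 1
  obtain ⟨P₇, Q₇⟩ := cubic 1 0 (-1)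
  obtain ⟨P₈, -⟩ := cubic 0 1 1
  obtain ⟨P₉, Q₉⟩ := cubic 1 1 1
  refine ⟨(h e₁ n₂).2.2, (h n₁ n₂).2.2, (h n₂ n₂).2.2, ?_, ?_, ?_, ?_, ?_, ?_⟩ <;>
    ext <;> dsimp only <;> linarith

def unitValued (u v w : ℝ) : (ℝ × ℝ × ℝ) →ₗ[ℝ] ℝ × ℝ × ℝ where
  toFun x := (u * x.1 + v * x.2.1 + w * x.2.2, 0, 0)
  map_add' x y := by ext <;> simp only [Prod.fst_add, Prod.snd_add] <;> ring
  map_smul' c x := by ext <;> simp only [Prod.smul_fst, Prod.smul_snd, smul_eq_mul,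
    RingHom.id_apply] <;> ring

theorem eq_coboundary_unitValued (hsymm : ∀ a b, h a b = h b a) {p q r : ℝ}
    (hee : h e₁ e₁ = (2 * p, 0, 0)) (hen₁ : h e₁ n₁ = (q, p, 0)) (hen₂ : h e₁ n₂ = (r / 2, 0, p))
    (hn₁n₁ : h n₁ n₁ = (0, 2 * q, 0)) (hn₁n₂ : h n₁ n₂ = (0, r / 2, q))
    (hn₂n₂ : h n₂ n₂ = (0, 0, r)) (a b : ℝ × ℝ × ℝ) :
    let μ := unitValued (-2 * p) (-2 * q) (-r)
    h a b = μ (mulJ12 a b) - mulJ12 a (μ b) - mulJ12 (μ a) b := by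
  rw [h.apply_eq_of_symm_prod3 hsymm, hee, hen₁, hen₂, hn₁n₁, hn₁n₂, hn₂n₂]
  ext <;>
    simp only [mulJ12, unitValued, LinearMap.coe_mk, AddHom.coe_mk, Prod.smul_mk, smul_eq_mul,
      Prod.mk_add_mk, Prod.mk_sub_mk] <;>
    ring

end J12

open J12 in
/-- every symmetric bilinear 2-cocycle of the Jordan algebra J₁₂
is a coboundary, i.e. H²(J₁₂, J₁₂) = 0. -/
theorem H2_J12_vanishes
    (h : (ℝ × ℝ × ℝ) →ₗ[ℝ] (ℝ × ℝ × ℝ) →ₗ[ℝ] (ℝ × ℝ × ℝ))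
    (hsymm : ∀ a b : ℝ × ℝ × ℝ, h a b = h b a)
    (hcocycle : ∀ a b : ℝ × ℝ × ℝ,
      mulJ12 (mulJ12 (h a a) b) a + mulJ12 (h (mulJ12 a a) b) a +
        h (mulJ12 (mulJ12 a a) b) a =
      mulJ12 (mulJ12 a a) (h b a) + mulJ12 (h a a) (mulJ12 b a) +
        h (mulJ12 a a) (mulJ12 b a)) :
    ∃ μ : (ℝ × ℝ × ℝ) →ₗ[ℝ] (ℝ × ℝ × ℝ),
      ∀ a b : ℝ × ℝ × ℝ, h a b = μ (mulJ12 a b) - mulJ12 a (μ b) - mulJ12 (μ a) b := by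
  obtain ⟨p, q, r, hee, hen₁, hen₂, hn₁n₁, hn₁n₂, hn₂n₂⟩ :=
    IsCocycle.exists_basis_values hsymm hcocycle
  exact ⟨_, eq_coboundary_unitValued hsymm hee hen₁ hen₂ hn₁n₁ hn₁n₂ hn₂n₂⟩
end

section
/- For the Jordan algebra J₁₂ with basis {e₁, n₁, n₂} and multiplication e₁² = e₁, e₁·nᵢ = (1/2)nᵢ, nᵢ·nⱼ = 0, every 2-cocycle h satisfies h(e₁,e₁) = α e₁, h(e₁,nᵢ) = βᵢ e₁ + (α/2)nᵢ, and h(nᵢ,nⱼ) = βⱼ nᵢ + βᵢ nⱼ for some scalars α, β₁, β₂ ∈ ℝ. -/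
set_option maxRecDepth 10000
set_option maxHeartbeats 1000000


/-- every symmetric bilinear 2-cocycle h of J₁₂ satisfies
h(e₁,e₁) = α e₁, h(e₁,nᵢ) = βᵢ e₁ + (α/2) nᵢ, h(nᵢ,nⱼ) = βⱼ nᵢ + βᵢ nⱼ
for some scalars α, β₁, β₂ ∈ ℝ. -/
theorem cocycles_of_J12
    (h : (ℝ × ℝ × ℝ) →ₗ[ℝ] (ℝ × ℝ × ℝ) →ₗ[ℝ] (ℝ × ℝ × ℝ))
    (hsymm : ∀ a b : ℝ × ℝ × ℝ, h a b = h b a)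
    (hcocycle : ∀ a b : ℝ × ℝ × ℝ,
      mulJ12 (mulJ12 (h a a) b) a + mulJ12 (h (mulJ12 a a) b) a +
        h (mulJ12 (mulJ12 a a) b) a =
      mulJ12 (mulJ12 a a) (h b a) + mulJ12 (h a a) (mulJ12 b a) +
        h (mulJ12 a a) (mulJ12 b a)) :
    ∃ α β₁ β₂ : ℝ,
      h (1, 0, 0) (1, 0, 0) = α • ((1 : ℝ), (0 : ℝ), (0 : ℝ)) ∧
      h (1, 0, 0) (0, 1, 0) =
        β₁ • ((1 : ℝ), (0 : ℝ), (0 : ℝ)) + (α / 2) • ((0 : ℝ), (1 : ℝ), (0 : ℝ)) ∧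
      h (1, 0, 0) (0, 0, 1) =
        β₂ • ((1 : ℝ), (0 : ℝ), (0 : ℝ)) + (α / 2) • ((0 : ℝ), (0 : ℝ), (1 : ℝ)) ∧
      h (0, 1, 0) (0, 1, 0) =
        β₁ • ((0 : ℝ), (1 : ℝ), (0 : ℝ)) + β₁ • ((0 : ℝ), (1 : ℝ), (0 : ℝ)) ∧
      h (0, 1, 0) (0, 0, 1) =
        β₂ • ((0 : ℝ), (1 : ℝ), (0 : ℝ)) + β₁ • ((0 : ℝ), (0 : ℝ), (1 : ℝ)) ∧
      h (0, 0, 1) (0, 0, 1) =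
        β₂ • ((0 : ℝ), (0 : ℝ), (1 : ℝ)) + β₂ • ((0 : ℝ), (0 : ℝ), (1 : ℝ)) := by
  have hvec : ∀ x y z : ℝ, ((x, y, z) : ℝ × ℝ × ℝ)
      = x • ((1:ℝ), (0:ℝ), (0:ℝ)) + y • ((0:ℝ), (1:ℝ), (0:ℝ)) + z • ((0:ℝ), (0:ℝ), (1:ℝ)) := by
    intro x y z
    simp [Prod.ext_iff]
  have hsplit : ∀ x y z u v w : ℝ, h (x, y, z) (u, v, w)
      = (x * u) • h (1,0,0) (1,0,0) + (x * v + y * u) • h (1,0,0) (0,1,0)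
        + (x * w + z * u) • h (1,0,0) (0,0,1) + (y * v) • h (0,1,0) (0,1,0)
        + (y * w + z * v) • h (0,1,0) (0,0,1) + (z * w) • h (0,0,1) (0,0,1) := by
    intro x y z u v w
    rw [hvec x y z, hvec u v w]
    simp only [map_add, map_smul, LinearMap.add_apply, LinearMap.smul_apply]
    rw [hsymm ((0:ℝ),(1:ℝ),(0:ℝ)) ((1:ℝ),(0:ℝ),(0:ℝ)), hsymm ((0:ℝ),(0:ℝ),(1:ℝ)) ((1:ℝ),(0:ℝ),(0:ℝ)),
        hsymm ((0:ℝ),(0:ℝ),(1:ℝ)) ((0:ℝ),(1:ℝ),(0:ℝ))]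
    module
  set A := h (1,0,0) (1,0,0) with hAdef
  set B := h (1,0,0) (0,1,0) with hBdef
  set C := h (1,0,0) (0,0,1) with hCdef
  set D := h (0,1,0) (0,1,0) with hDdef
  set F := h (0,1,0) (0,0,1) with hFdef
  set G := h (0,0,1) (0,0,1) with hGdef
  obtain ⟨A1, A2, A3⟩ := A
  obtain ⟨B1, B2, B3⟩ := B
  obtain ⟨C1, C2, C3⟩ := C
  obtain ⟨D1, D2, D3⟩ := D
  obtain ⟨F1, F2, F3⟩ := F
  obtain ⟨G1, G2, G3⟩ := G
  have E1 := hcocycle (0,0,1) (1,0,0)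
  have E2 := hcocycle (0,1,0) (1,0,0)
  have E3 := hcocycle (1,0,0) (1,0,0)
  have E4 := hcocycle (0,1,1) (1,0,0)
  have E5 := hcocycle (1,0,1) (1,0,0)
  have E6 := hcocycle (1,0,-1) (1,0,0)
  have E7 := hcocycle (1,1,0) (1,0,0)
  have E8 := hcocycle (1,-1,0) (1,0,0)
  have E9 := hcocycle (1,1,1) (1,0,0)
  simp only [mulJ12, hsplit, Prod.ext_iff, Prod.smul_mk, Prod.mk_add_mk, Prod.fst_add,
    Prod.snd_add, Prod.smul_fst, Prod.smul_snd, smul_eq_mul] at E1 E2 E3 E4 E5 E6 E7 E8 E9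
  norm_num at E1 E2 E3 E4 E5 E6 E7 E8 E9
  obtain ⟨E31, E32⟩ := E3
  obtain ⟨E51, E52, E53⟩ := E5
  obtain ⟨E61, E62, E63⟩ := E6
  obtain ⟨E71, E72, E73⟩ := E7
  obtain ⟨E81, E82, E83⟩ := E8
  obtain ⟨E91, E92, E93⟩ := E9
  refine ⟨A1, B1, C1, ?_, ?_, ?_, ?_, ?_, ?_⟩ <;>
    simp only [Prod.ext_iff, Prod.smul_mk, Prod.mk_add_mk, smul_eq_mul] <;>
    norm_num <;>
    constructor <;> try constructor
  all_goals linarith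
end

section
/- The 3-dimensional real Jordan algebras J₃ = J(V,f₁), J₄ = J(V,f₂), J₅ = J(V,f₃), where f₁ has diagonal form (1,−1), f₂ has diagonal form (−1,−1), and f₃ has diagonal form (1,1) on a 2-dimensional real space V, are pairwise non-isomorphic. -/
/-- Multiplication of the Jordan algebra of a diagonal symmetric bilinear form
diag(a,b) on a 2-dimensional space, on ℝ³ with unit e₁ = (1,0,0):
e₂² = a·e₁, e₃² = b·e₁, e₂·e₃ = 0. -/
def mulJf (a b : ℝ) (x y : ℝ × ℝ × ℝ) : ℝ × ℝ × ℝ :=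
  (x.1 * y.1 + a * (x.2.1 * y.2.1) + b * (x.2.2 * y.2.2),
   x.1 * y.2.1 + x.2.1 * y.1, x.1 * y.2.2 + x.2.2 * y.1)

/-- Isomorphism of algebra structures on ℝ³. -/
def AlgebrasIso (m₁ m₂ : (ℝ × ℝ × ℝ) → (ℝ × ℝ × ℝ) → (ℝ × ℝ × ℝ)) : Prop :=
  ∃ φ : (ℝ × ℝ × ℝ) ≃ₗ[ℝ] (ℝ × ℝ × ℝ), ∀ x y, φ (m₁ x y) = m₂ (φ x) (φ y)

lemma mulJf_one_left (a b : ℝ) (y : ℝ × ℝ × ℝ) :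
    mulJf a b (1, 0, 0) y = y := by
  simp [mulJf]

lemma mulJf_one_right (a b : ℝ) (x : ℝ × ℝ × ℝ) :
    mulJf a b x (1, 0, 0) = x := by
  simp [mulJf]

/-- the Jordan algebras J₃ = J(V,f₁), J₄ = J(V,f₂), J₅ = J(V,f₃)
with f₁ of diagonal form (1,−1), f₂ of form (−1,−1) and f₃ of form (1,1)
are pairwise non-isomorphic. -/
theorem J3_J4_J5_pairwise_noniso :
    ¬ AlgebrasIso (mulJf 1 (-1)) (mulJf (-1) (-1)) ∧
    ¬ AlgebrasIso (mulJf 1 (-1)) (mulJf 1 1) ∧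
    ¬ AlgebrasIso (mulJf (-1) (-1)) (mulJf 1 1) := by
  refine ⟨?_, ?_, ?_⟩
  · rintro ⟨φ, hφ⟩
    -- (0,1,1) is a nonzero nilpotent in J₃, but J₄ has none.
    have h := hφ ((0:ℝ), (1:ℝ), (1:ℝ)) ((0:ℝ), (1:ℝ), (1:ℝ))
    have hz : mulJf 1 (-1) ((0:ℝ), (1:ℝ), (1:ℝ)) ((0:ℝ), (1:ℝ), (1:ℝ)) = 0 := by
      simp [mulJf, Prod.ext_iff]
    rw [hz, map_zero] at h
    have hne : φ ((0:ℝ), (1:ℝ), (1:ℝ)) ≠ 0 := by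
      intro h0
      have := φ.injective (h0.trans (map_zero φ).symm)
      simp [Prod.ext_iff] at this
    set p := φ ((0:ℝ), (1:ℝ), (1:ℝ)) with hp
    obtain ⟨α, u, v⟩ := p
    simp [mulJf, Prod.ext_iff] at h hne
    obtain ⟨h1, h2, h3⟩ := h
    rcases eq_or_ne α 0 with hα | hα
    · subst hα
      have hu : u = 0 := by nlinarith [sq_nonneg u, sq_nonneg v]
      have hv : v = 0 := by nlinarith [sq_nonneg u, sq_nonneg v]
      exact hne rfl hu hv
    · have hu : u = 0 := by
        have : α * u = 0 := by linarith
        exact (mul_eq_zero.1 this).resolve_left hα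
      have hv : v = 0 := by
        have : α * v = 0 := by linarith
        exact (mul_eq_zero.1 this).resolve_left hα
      subst hu; subst hv
      exact hα (by nlinarith)
  · rintro ⟨φ, hφ⟩
    have h := hφ ((0:ℝ), (1:ℝ), (1:ℝ)) ((0:ℝ), (1:ℝ), (1:ℝ))
    have hz : mulJf 1 (-1) ((0:ℝ), (1:ℝ), (1:ℝ)) ((0:ℝ), (1:ℝ), (1:ℝ)) = 0 := by
      simp [mulJf, Prod.ext_iff]
    rw [hz, map_zero] at h
    have hne : φ ((0:ℝ), (1:ℝ), (1:ℝ)) ≠ 0 := by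
      intro h0
      have := φ.injective (h0.trans (map_zero φ).symm)
      simp [Prod.ext_iff] at this
    set p := φ ((0:ℝ), (1:ℝ), (1:ℝ)) with hp
    obtain ⟨α, u, v⟩ := p
    simp [mulJf, Prod.ext_iff] at h hne
    obtain ⟨h1, h2, h3⟩ := h
    rcases eq_or_ne α 0 with hα | hα
    · subst hα
      have hu : u = 0 := by nlinarith [sq_nonneg u, sq_nonneg v]
      have hv : v = 0 := by nlinarith [sq_nonneg u, sq_nonneg v]
      exact hne rfl hu hv
    · have hu : u = 0 := by
        have : α * u = 0 := by linarith
        exact (mul_eq_zero.1 this).resolve_left hα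
      have hv : v = 0 := by
        have : α * v = 0 := by linarith
        exact (mul_eq_zero.1 this).resolve_left hα
      subst hu; subst hv
      exact hα (by nlinarith)
  · rintro ⟨φ, hφ⟩
    -- φ maps the unit to the unit.
    have hunit : φ ((1:ℝ), (0:ℝ), (0:ℝ)) = ((1:ℝ), (0:ℝ), (0:ℝ)) := by
      have h := hφ ((1:ℝ), (0:ℝ), (0:ℝ)) (φ.symm ((1:ℝ), (0:ℝ), (0:ℝ)))
      rw [mulJf_one_left, φ.apply_symm_apply, mulJf_one_right] at h
      exact h.symm
    -- (0,1,0)² = -e₁ in J₄, but J₅ has no square root of -e₁.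
    have h := hφ ((0:ℝ), (1:ℝ), (0:ℝ)) ((0:ℝ), (1:ℝ), (0:ℝ))
    have hz : mulJf (-1) (-1) ((0:ℝ), (1:ℝ), (0:ℝ)) ((0:ℝ), (1:ℝ), (0:ℝ))
        = -((1:ℝ), (0:ℝ), (0:ℝ)) := by
      simp [mulJf, Prod.ext_iff]
    rw [hz, map_neg, hunit] at h
    set p := φ ((0:ℝ), (1:ℝ), (0:ℝ)) with hp
    obtain ⟨α, u, v⟩ := p
    simp [mulJf, Prod.ext_iff] at h
    obtain ⟨h1, h2, h3⟩ := h
    nlinarith [sq_nonneg α, sq_nonneg u, sq_nonneg v]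
end

section
/- The Jordan algebra J₃ = J(V, f₁) (where f₁(e₂,e₂)=1, f₁(e₃,e₃)=−1, f₁(e₂,e₃)=0) degenerates to J₈: under the family of bases A_t = (1/2)(e₁+e₂), B_t = (1/2)(e₁−e₂), C_t = t·e₃ (t ≠ 0), the structure constants of J₃ converge as t → 0 to those of J₈, given by A² = A, B² = B, A·C = B·C = (1/2)C, A·B = C² = 0. -/
/-- Multiplication of J₃ = J(V,f₁) on ℝ³: e₁ = (1,0,0) is the unit,
e₂² = e₁, e₃² = −e₁, e₂·e₃ = 0. -/
def mulJ3 (x y : ℝ × ℝ × ℝ) : ℝ × ℝ × ℝ :=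
  (x.1 * y.1 + x.2.1 * y.2.1 - x.2.2 * y.2.2,
   x.1 * y.2.1 + x.2.1 * y.1, x.1 * y.2.2 + x.2.2 * y.1)

/-- J₃ degenerates to J₈: in the basis A = (1/2)(e₁+e₂),
B = (1/2)(e₁−e₂), C = t·e₃ (t ≠ 0) the structure constants of J₃ are
A² = A, B² = B, A·B = 0, A·C = B·C = (1/2)C, C² = −t²·(A+B), which converge as
t → 0 to the structure constants of J₈ (where C² = 0). -/
theorem J3_degenerates_to_J8 (t : ℝ) (ht : t ≠ 0)
    (A B C : ℝ × ℝ × ℝ)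
    (hA : A = ((1 : ℝ) / 2, (1 : ℝ) / 2, (0 : ℝ)))
    (hB : B = ((1 : ℝ) / 2, -(1 : ℝ) / 2, (0 : ℝ)))
    (hC : C = ((0 : ℝ), (0 : ℝ), t)) :
    LinearIndependent ℝ ![A, B, C] ∧
    mulJ3 A A = A ∧
    mulJ3 B B = B ∧
    mulJ3 A B = 0 ∧
    mulJ3 A C = (2 : ℝ)⁻¹ • C ∧
    mulJ3 B C = (2 : ℝ)⁻¹ • C ∧
    mulJ3 C C = (-(t ^ 2)) • (A + B) := by
  subst hA hB hC
  refine ⟨?_, ?_, ?_, ?_, ?_, ?_, ?_⟩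
  · rw [Fintype.linearIndependent_iff]
    intro g hg i
    have h := hg
    rw [Fin.sum_univ_three] at h
    simp only [Matrix.cons_val_zero, Matrix.cons_val_one, Matrix.head_cons,
      Matrix.cons_val_two, Matrix.tail_cons, Prod.smul_mk, Prod.mk_add_mk,
      smul_eq_mul, Prod.mk.injEq, Prod.ext_iff,
      Prod.fst_zero, Prod.snd_zero] at h
    obtain ⟨h1, h2, h3⟩ := h
    have hg0 : g 0 = 0 := by linarith
    have hg1 : g 1 = 0 := by linarith
    have hg2 : g 2 = 0 := by
      have : g 2 * t = 0 := by linarith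
      exact (mul_eq_zero.mp this).resolve_right ht
    clear hg h1 h2 h3
    fin_cases i <;> assumption
  all_goals
    simp only [mulJ3, Prod.ext_iff, Prod.smul_mk, Prod.mk_add_mk, smul_eq_mul,
      Prod.fst_zero, Prod.snd_zero]
    norm_num
    try ring
end

section
/- The Jordan algebra J₅ = J(V, f₃) (with f₃ the positive definite form: e₂² = e₃² = e₁, e₂·e₃ = 0, e₁ unit) degenerates to J₁₉: for t ≠ 0, setting A_t = (1/2)(e₁−e₂), B_t = t·e₃, C_t = (t²/2)(e₁+e₂), one has A_t² = A_t, A_t·B_t = (1/2)B_t, B_t² = C_t + t²A_t, B_t·C_t = (t²/2)B_t, C_t² = t²C_t, A_t·C_t = 0, so as t → 0 the structure constants converge to those of J₁₉: e² = e, n₁² = n₂, e·n₁ = (1/2)n₁, all other products zero. -/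
/-- Multiplication of J₅ = J(V,f₃) on ℝ³: e₁ = (1,0,0) is the unit,
e₂² = e₃² = e₁, e₂·e₃ = 0. -/
def mulJ5 (x y : ℝ × ℝ × ℝ) : ℝ × ℝ × ℝ :=
  (x.1 * y.1 + x.2.1 * y.2.1 + x.2.2 * y.2.2,
   x.1 * y.2.1 + x.2.1 * y.1, x.1 * y.2.2 + x.2.2 * y.1)

theorem linearIndependent_antidiag_e3_diag {K : Type*} [Field K] [NeZero (2 : K)]
    {a b c : K} (ha : a ≠ 0) (hb : b ≠ 0) (hc : c ≠ 0) :
    LinearIndependent K ![(a, -a, 0), (0, 0, b), (c, c, 0)] := by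
  rw [Fintype.linearIndependent_iff]
  intro g hg
  simp only [Fin.sum_univ_three, Matrix.cons_val_zero, Matrix.cons_val_one, Matrix.cons_val,
    Prod.smul_mk, smul_eq_mul, mul_neg, mul_zero, Prod.mk_add_mk, add_zero, zero_add,
    Prod.mk_eq_zero] at hg
  obtain ⟨h₁, h₂, h₃⟩ := hg
  have hg₀ : 2 * a * g 0 = 0 := by linear_combination h₁ - h₂
  have hg₂ : 2 * c * g 2 = 0 := by linear_combination h₁ + h₂
  intro i
  fin_cases i
  · exact (mul_eq_zero.1 hg₀).resolve_left (mul_ne_zero two_ne_zero ha)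
  · simpa [hb] using h₃
  · exact (mul_eq_zero.1 hg₂).resolve_left (mul_ne_zero two_ne_zero hc)

/-- J₅ degenerates to J₁₉: for t ≠ 0, with A = (1/2)(e₁−e₂),
B = t·e₃, C = (t²/2)(e₁+e₂) one has A² = A, A·B = (1/2)B, B² = C + t²·A,
B·C = (t²/2)·B, C² = t²·C, A·C = 0, so as t → 0 the structure constants
converge to those of J₁₉. -/
theorem J5_degenerates_to_J19 (t : ℝ) (ht : t ≠ 0)
    (A B C : ℝ × ℝ × ℝ)
    (hA : A = ((1 : ℝ) / 2, -(1 : ℝ) / 2, (0 : ℝ)))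
    (hB : B = ((0 : ℝ), (0 : ℝ), t))
    (hC : C = (t ^ 2 / 2, t ^ 2 / 2, (0 : ℝ))) :
    LinearIndependent ℝ ![A, B, C] ∧
    mulJ5 A A = A ∧
    mulJ5 A B = (2 : ℝ)⁻¹ • B ∧
    mulJ5 B B = C + (t ^ 2) • A ∧
    mulJ5 B C = (t ^ 2 / 2) • B ∧
    mulJ5 C C = (t ^ 2) • C ∧
    mulJ5 A C = 0 := by
  subst hA hB hC
  refine ⟨?_, ?_, ?_, ?_, ?_, ?_, ?_⟩
  · rw [neg_div]
    exact linearIndependent_antidiag_e3_diag (by norm_num) ht (by positivity)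
  all_goals
    ext <;>
    simp only [mulJ5, Prod.smul_mk, Prod.mk_add_mk, smul_eq_mul, Prod.fst_zero, Prod.snd_zero] <;>
    ring
end

section
/- Let J be a 3-dimensional real Jordan algebra whose semi-simple part is B₄ ≅ ℂ (with idempotent e₁) and whose radical N = ℝn₁ is one-dimensional with n₁ in the Peirce 1-component relative to e₁, so e₁·n₁ = n₁ and e₂·n₁ = α n₁ for some α ∈ ℝ. Then the Jordan identity forces α = 0. -/
/-- if a 3-dimensional real Jordan algebra has semi-simple part
B₄ ≅ ℂ (basis e₁, e₂ with e₁² = e₁, e₁·e₂ = e₂, e₂² = −e₁) and one-dimensional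
radical ℝn₁ with n₁ in the Peirce 1-component of e₁ (e₁·n₁ = n₁, n₁² = 0,
e₂·n₁ = α·n₁), then the Jordan identity forces α = 0. -/
theorem radical_in_P1_of_B4_forces_alpha_zero
    {J : Type*} [AddCommGroup J] [Module ℝ J]
    (mul : J →ₗ[ℝ] J →ₗ[ℝ] J)
    (comm : ∀ x y : J, mul x y = mul y x)
    (jordan : ∀ x y : J, mul (mul (mul x x) y) x = mul (mul x x) (mul y x))
    (e₁ e₂ n₁ : J) (hind : LinearIndependent ℝ ![e₁, e₂, n₁])
    (h11 : mul e₁ e₁ = e₁) (h12 : mul e₁ e₂ = e₂) (h22 : mul e₂ e₂ = -e₁)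
    (h1n : mul e₁ n₁ = n₁) (hnn : mul n₁ n₁ = 0)
    (α : ℝ) (h2n : mul e₂ n₁ = α • n₁) :
    α = 0 := by
  have h21 : mul e₂ e₁ = e₂ := by rw [comm]; exact h12
  have hn1 : mul n₁ e₁ = n₁ := by rw [comm]; exact h1n
  have hn2 : mul n₁ e₂ = α • n₁ := by rw [comm]; exact h2n
  have key := jordan (e₂ + n₁) e₂
  simp only [map_add, LinearMap.add_apply, map_smul, LinearMap.smul_apply, map_neg,
    LinearMap.neg_apply, h11, h12, h22, h1n, hnn, h2n, h21, hn1, hn2, smul_add, smul_neg,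
    smul_smul, smul_zero, add_zero, zero_add, neg_zero, neg_neg] at key
  have hn : ((2 : ℝ) * (α * (α * α)) + 2 * α) • n₁ = 0 := by
    have := sub_eq_zero_of_eq key
    rw [← this]
    module
  have hnz : n₁ ≠ 0 := hind.ne_zero 2
  have hcoef : (2 : ℝ) * (α * (α * α)) + 2 * α = 0 :=
    (smul_eq_zero.mp hn).resolve_right hnz
  nlinarith [sq_nonneg α, sq_nonneg (α * α)]
end

section
/- Let J be a commutative Jordan algebra over a field of characteristic 0 containing an idempotent e with Peirce decomposition N = N₀ ⊕ N_{1/2} ⊕ N₁ of a nilpotent ideal N, where dim N_i = dim N_{1/2} = 1 for i ∈ {0,1} and N has nilpotency type (1,1) (i.e., N = ℝn + ℝn² for some n with n³ = 0). If N_i = ℝa and N_{1/2} = ℝb, then b² = αa with α ≠ 0, and N = ℝb ⊕ ℝb². -/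
/-- in a real Jordan algebra with idempotent e, if the nilpotent
ideal N = ℝa ⊕ ℝb has nilpotency type (1,1) with a in the Peirce i-component
(i ∈ {0,1}) and b in the Peirce 1/2-component, then b² = αa with α ≠ 0 and
N = ℝb ⊕ ℝb². -/
theorem radical_type_11_generated_by_half_component
    {J : Type*} [AddCommGroup J] [Module ℝ J]
    (mul : J →ₗ[ℝ] J →ₗ[ℝ] J)
    (comm : ∀ x y : J, mul x y = mul y x)
    (jordan : ∀ x y : J, mul (mul (mul x x) y) x = mul (mul x x) (mul y x))
    (e : J) (he : mul e e = e)
    (i : ℝ) (hi : i = 0 ∨ i = 1)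
    (a b : J) (ha : a ≠ 0) (hb : b ≠ 0)
    (hae : mul a e = i • a) (hbe : mul b e = (2 : ℝ)⁻¹ • b)
    (ha2 : mul a a = 0) (hab : mul a b = 0)
    (N : Submodule ℝ J) (hN : N = Submodule.span ℝ {a, b})
    (hsub : ∀ x ∈ N, ∀ y ∈ N, mul x y ∈ N)
    (hN3 : ∀ x ∈ N, ∀ y ∈ N, ∀ z ∈ N, mul (mul x y) z = 0)
    (htype : ∃ n ∈ N, N = Submodule.span ℝ {n, mul n n} ∧
      mul n n ≠ 0 ∧ mul (mul n n) n = 0) :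
    ∃ α : ℝ, α ≠ 0 ∧ mul b b = α • a ∧ Submodule.span ℝ {b, mul b b} = N := by
  subst hN
  have hi2 : (2:ℝ)⁻¹ - i ≠ 0 := by rcases hi with h | h <;> rw [h] <;> norm_num
  -- linear independence of a, b
  have hindep : ∀ x y : ℝ, x • a + y • b = 0 → x = 0 ∧ y = 0 := by
    intro x y hxy
    have h1 : mul (x • a + y • b) e = 0 := by rw [hxy]; simp
    have h2 : (x * i) • a + (y * (2:ℝ)⁻¹) • b = 0 := by
      simpa [map_add, map_smul, hae, hbe, smul_smul] using h1
    have h3 : (y * ((2:ℝ)⁻¹ - i)) • b = 0 := by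
      have : (y * ((2:ℝ)⁻¹ - i)) • b =
          ((x * i) • a + (y * (2:ℝ)⁻¹) • b) - i • (x • a + y • b) := by module
      rw [this, h2, hxy, smul_zero, sub_zero]
    have hy : y = 0 := by
      rcases smul_eq_zero.mp h3 with h | h
      · rcases mul_eq_zero.mp h with h | h
        · exact h
        · exact absurd h hi2
      · exact absurd h hb
    subst hy
    have hx : x • a = 0 := by simpa using hxy
    rcases smul_eq_zero.mp hx with h | h
    · exact ⟨h, rfl⟩
    · exact absurd h ha
  have haN : a ∈ Submodule.span ℝ {a, b} :=
    Submodule.subset_span (by simp)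
  have hbN : b ∈ Submodule.span ℝ {a, b} :=
    Submodule.subset_span (by simp)
  obtain ⟨β, γ, hβγ⟩ := Submodule.mem_span_pair.mp (hsub b hbN b hbN)
  -- key: (b²·e)·b = 0
  have key : mul (mul (mul b b) e) b = 0 := by
    rw [jordan b e, comm e b, hbe, map_smul]
    rw [hN3 b hbN b hbN b hbN, smul_zero]
  have key2 : ((γ * (2:ℝ)⁻¹) * β) • a + ((γ * (2:ℝ)⁻¹) * γ) • b = 0 := by
    have h1 : mul (mul b b) e = (β * i) • a + (γ * (2:ℝ)⁻¹) • b := by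
      rw [← hβγ]; simp [map_add, map_smul, hae, hbe, smul_smul]
    have h2 : mul (mul (mul b b) e) b
        = ((γ * (2:ℝ)⁻¹) * β) • a + ((γ * (2:ℝ)⁻¹) * γ) • b := by
      rw [h1]
      simp [map_add, map_smul, LinearMap.add_apply, LinearMap.smul_apply, hab,
        ← hβγ, smul_smul, smul_add]
    rw [← h2, key]
  have hγ : γ = 0 := by
    have := (hindep _ _ key2).2
    rcases mul_eq_zero.mp this with h | h
    · rcases mul_eq_zero.mp h with h | h
      · exact h
      · norm_num at h
    · exact h
  have hbb : mul b b = β • a := by rw [← hβγ, hγ]; simp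
  -- β ≠ 0 from htype
  obtain ⟨n, hnN, -, hn2, -⟩ := htype
  obtain ⟨s, t, hst⟩ := Submodule.mem_span_pair.mp hnN
  have hn2' : mul n n = ((t * t) * β) • a := by
    rw [← hst]
    simp [map_add, map_smul, LinearMap.add_apply, LinearMap.smul_apply, ha2,
      hab, comm b a, hbb, smul_smul, smul_add, mul_assoc]
  have hβ : β ≠ 0 := by
    intro h
    apply hn2
    rw [hn2', h, mul_zero, zero_smul]
  refine ⟨β, hβ, hbb, ?_⟩
  apply le_antisymm
  · rw [Submodule.span_le]
    intro x hx
    rcases hx with h | h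
    · exact h ▸ hbN
    · simp only [Set.mem_singleton_iff] at h
      rw [h, hbb]
      exact Submodule.smul_mem _ _ haN
  · have hamem : a ∈ Submodule.span ℝ {b, mul b b} := by
      have : a = β⁻¹ • mul b b := by rw [hbb, smul_smul, inv_mul_cancel₀ hβ, one_smul]
      rw [this]
      exact Submodule.smul_mem _ _ (Submodule.subset_span (by right; rfl))
    have hbmem : b ∈ Submodule.span ℝ {b, mul b b} :=
      Submodule.subset_span (by left; rfl)
    rw [Submodule.span_le]
    intro x hx
    rcases hx with h | h
    · exact h ▸ hamem
    · simp only [Set.mem_singleton_iff] at h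
      exact h ▸ hbmem
end

section
/- Every 3-dimensional nilpotent commutative Jordan ℝ-algebra J with J³ = 0 and dim J² = 1 (nilpotency type (2,1)) is isomorphic to exactly one of: J₂₄ (n₁² = n₂² = n₃), J₂₅ (n₁² = n₂, all others zero), or J₂₆ (n₁·n₂ = n₃), where unspecified products of basis elements are zero. -/
/-- Multiplication of J₂₅ = B₃ ⊕ ℝn₃: n₁² = n₂, all other basis products zero. -/
def mulJ25 (x y : ℝ × ℝ × ℝ) : ℝ × ℝ × ℝ :=
  (0, x.1 * y.1, 0)

/-- Isomorphism of an abstract algebra onto an algebra structure on ℝ³. -/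
def IsoTo {J : Type*} [AddCommGroup J] [Module ℝ J]
    (mul : J →ₗ[ℝ] J →ₗ[ℝ] J)
    (m : (ℝ × ℝ × ℝ) → (ℝ × ℝ × ℝ) → (ℝ × ℝ × ℝ)) : Prop :=
  ∃ φ : J ≃ₗ[ℝ] (ℝ × ℝ × ℝ), ∀ x y : J, φ (mul x y) = m (φ x) (φ y)

open Module

section Tables

variable {J : Type*} [AddCommGroup J] [Module ℝ J]

def tripleMap (u₁ u₂ u₃ : J) : ℝ × ℝ × ℝ →ₗ[ℝ] J where
  toFun p := p.1 • u₁ + p.2.1 • u₂ + p.2.2 • u₃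
  map_add' p q := by simp only [Prod.fst_add, Prod.snd_add]; module
  map_smul' c p := by simp only [Prod.smul_fst, Prod.smul_snd, RingHom.id_apply]; module

@[simp]
lemma tripleMap_apply (u₁ u₂ u₃ : J) (p : ℝ × ℝ × ℝ) :
    tripleMap u₁ u₂ u₃ p = p.1 • u₁ + p.2.1 • u₂ + p.2.2 • u₃ := rfl

lemma isoTo_of_injective (hdim : finrank ℝ J = 3) (mul : J →ₗ[ℝ] J →ₗ[ℝ] J)
    (m : ℝ × ℝ × ℝ → ℝ × ℝ × ℝ → ℝ × ℝ × ℝ) (ψ : ℝ × ℝ × ℝ →ₗ[ℝ] J)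
    (hψ : Function.Injective ψ) (hmul : ∀ p q, ψ (m p q) = mul (ψ p) (ψ q)) :
    IsoTo mul m := by
  have : FiniteDimensional ℝ J := Module.finite_of_finrank_pos (by omega)
  let Ψ := ψ.linearEquivOfInjective hψ (by simp [hdim])
  have hΨ : ∀ z, ψ (Ψ.symm z) = z := Ψ.apply_symm_apply
  refine ⟨Ψ.symm, fun x y => Ψ.symm_apply_eq.2 ?_⟩
  rw [LinearMap.linearEquivOfInjective_apply, hmul, hΨ, hΨ]

variable (mul : J →ₗ[ℝ] J →ₗ[ℝ] J) (comm : ∀ x y, mul x y = mul y x)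
include comm

lemma mul_tripleMap (u₁ u₂ u₃ : J) (p q : ℝ × ℝ × ℝ) :
    mul (tripleMap u₁ u₂ u₃ p) (tripleMap u₁ u₂ u₃ q) =
      (p.1 * q.1) • mul u₁ u₁ + (p.1 * q.2.1 + p.2.1 * q.1) • mul u₁ u₂ +
      (p.1 * q.2.2 + p.2.2 * q.1) • mul u₁ u₃ + (p.2.1 * q.2.1) • mul u₂ u₂ +
      (p.2.1 * q.2.2 + p.2.2 * q.2.1) • mul u₂ u₃ + (p.2.2 * q.2.2) • mul u₃ u₃ := by
  simp only [tripleMap_apply, map_add, map_smul, LinearMap.add_apply, LinearMap.smul_apply]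
  rw [comm u₂ u₁, comm u₃ u₁, comm u₃ u₂]
  module

variable (hdim : finrank ℝ J = 3) {u₁ u₂ u₃ : J}
include hdim

lemma isoTo_mulJ24 (hu₃ : u₃ ≠ 0) (h₁₁ : mul u₁ u₁ = u₃) (h₁₂ : mul u₁ u₂ = 0)
    (h₂₂ : mul u₂ u₂ = u₃) (h₁₃ : mul u₁ u₃ = 0) (h₂₃ : mul u₂ u₃ = 0) (h₃₃ : mul u₃ u₃ = 0) :
    IsoTo mul mulJ24 := by
  have hom : ∀ p q, tripleMap u₁ u₂ u₃ (mulJ24 p q) =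
      mul (tripleMap u₁ u₂ u₃ p) (tripleMap u₁ u₂ u₃ q) := by
    intro p q
    rw [mul_tripleMap mul comm, h₁₁, h₁₂, h₂₂, h₁₃, h₂₃, h₃₃]
    simp only [mulJ24, tripleMap_apply]
    module
  refine isoTo_of_injective hdim mul _ _ ((injective_iff_map_eq_zero _).2 fun p hp => ?_) hom
  have hkill : ∀ q, tripleMap u₁ u₂ u₃ (mulJ24 p q) = 0 := fun q => by
    rw [hom, hp, map_zero, LinearMap.zero_apply]
  obtain ⟨h₁, h₂⟩ : p.1 = 0 ∧ p.2.1 = 0 :=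
    mul_self_add_mul_self_eq_zero.1 (by simpa [mulJ24, hu₃] using hkill p)
  simp only [tripleMap_apply, h₁, h₂, zero_smul, zero_add, smul_eq_zero, hu₃, or_false] at hp
  simp [Prod.ext_iff, h₁, h₂, hp]

lemma isoTo_mulJ25 (hind : LinearIndependent ℝ ![u₂, u₃]) (h₁₁ : mul u₁ u₁ = u₂)
    (h₁₂ : mul u₁ u₂ = 0) (h₂₂ : mul u₂ u₂ = 0) (h₁₃ : mul u₁ u₃ = 0) (h₂₃ : mul u₂ u₃ = 0)
    (h₃₃ : mul u₃ u₃ = 0) : IsoTo mul mulJ25 := by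
  have hom : ∀ p q, tripleMap u₁ u₂ u₃ (mulJ25 p q) =
      mul (tripleMap u₁ u₂ u₃ p) (tripleMap u₁ u₂ u₃ q) := by
    intro p q
    rw [mul_tripleMap mul comm, h₁₁, h₁₂, h₂₂, h₁₃, h₂₃, h₃₃]
    simp only [mulJ25, tripleMap_apply]
    module
  refine isoTo_of_injective hdim mul _ _ ((injective_iff_map_eq_zero _).2 fun p hp => ?_) hom
  have hkill : ∀ q, tripleMap u₁ u₂ u₃ (mulJ25 p q) = 0 := fun q => by
    rw [hom, hp, map_zero, LinearMap.zero_apply]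
  have hu₂ : u₂ ≠ 0 := by simpa using hind.ne_zero 0
  have h₁ : p.1 = 0 := by simpa [mulJ25, hu₂] using hkill (1, 0, 0)
  simp only [tripleMap_apply, h₁, zero_smul, zero_add] at hp
  obtain ⟨h₂, h₃⟩ := LinearIndependent.pair_iff.1 hind _ _ hp
  simp [Prod.ext_iff, h₁, h₂, h₃]

lemma isoTo_mulJ26 (hu₃ : u₃ ≠ 0) (h₁₁ : mul u₁ u₁ = 0) (h₁₂ : mul u₁ u₂ = u₃)
    (h₂₂ : mul u₂ u₂ = 0) (h₁₃ : mul u₁ u₃ = 0) (h₂₃ : mul u₂ u₃ = 0) (h₃₃ : mul u₃ u₃ = 0) :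
    IsoTo mul mulJ26 := by
  have hom : ∀ p q, tripleMap u₁ u₂ u₃ (mulJ26 p q) =
      mul (tripleMap u₁ u₂ u₃ p) (tripleMap u₁ u₂ u₃ q) := by
    intro p q
    rw [mul_tripleMap mul comm, h₁₁, h₁₂, h₂₂, h₁₃, h₂₃, h₃₃]
    simp only [mulJ26, tripleMap_apply]
    module
  refine isoTo_of_injective hdim mul _ _ ((injective_iff_map_eq_zero _).2 fun p hp => ?_) hom
  have hkill : ∀ q, tripleMap u₁ u₂ u₃ (mulJ26 p q) = 0 := fun q => by
    rw [hom, hp, map_zero, LinearMap.zero_apply]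
  have h₂ : p.2.1 = 0 := by simpa [mulJ26, hu₃] using hkill (1, 0, 0)
  have h₁ : p.1 = 0 := by simpa [mulJ26, hu₃] using hkill (0, 1, 0)
  simp only [tripleMap_apply, h₁, h₂, zero_smul, zero_add, smul_eq_zero, hu₃, or_false] at hp
  simp [Prod.ext_iff, h₁, h₂, hp]

end Tables

section Invariants

variable {m₁ m₂ : ℝ × ℝ × ℝ → ℝ × ℝ × ℝ → ℝ × ℝ × ℝ}

lemma AlgebrasIso.symm (h : AlgebrasIso m₁ m₂) : AlgebrasIso m₂ m₁ := by
  obtain ⟨φ, hφ⟩ := h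
  refine ⟨φ.symm, fun x y => φ.symm_apply_eq.2 ?_⟩
  rw [hφ, φ.apply_symm_apply, φ.apply_symm_apply]

lemma AlgebrasIso.mul_eq_zero_of_mul_self_eq_zero (h : AlgebrasIso m₁ m₂)
    (h₂ : ∀ x, m₂ x x = 0 → ∀ y, m₂ x y = 0) : ∀ x, m₁ x x = 0 → ∀ y, m₁ x y = 0 := by
  obtain ⟨φ, hφ⟩ := h
  intro x hx y
  apply φ.injective
  rw [hφ, map_zero, h₂ _ (by rw [← hφ, hx, map_zero])]

lemma AlgebrasIso.mul_ne_zero_of_mul_self_ne_zero (h : AlgebrasIso m₁ m₂)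
    (h₂ : ∀ x y, m₂ x x ≠ 0 → m₂ y y ≠ 0 → m₂ x y ≠ 0) :
    ∀ x y, m₁ x x ≠ 0 → m₁ y y ≠ 0 → m₁ x y ≠ 0 := by
  obtain ⟨φ, hφ⟩ := h
  intro x y hx hy hxy
  refine h₂ (φ x) (φ y) ?_ ?_ ?_ <;> rw [← hφ] <;> simpa

end Invariants

lemma mulJ24_mul_eq_zero_of_mul_self_eq_zero (x : ℝ × ℝ × ℝ) (hx : mulJ24 x x = 0)
    (y : ℝ × ℝ × ℝ) : mulJ24 x y = 0 := by
  obtain ⟨h₁, h₂⟩ := mul_self_add_mul_self_eq_zero.1 (congrArg (·.2.2) hx)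
  simp [mulJ24, h₁, h₂]

lemma mulJ25_mul_eq_zero_of_mul_self_eq_zero (x : ℝ × ℝ × ℝ) (hx : mulJ25 x x = 0)
    (y : ℝ × ℝ × ℝ) : mulJ25 x y = 0 := by
  have h₁ : x.1 = 0 := mul_self_eq_zero.1 (congrArg (·.2.1) hx)
  simp [mulJ25, h₁]

lemma mulJ25_mul_ne_zero_of_mul_self_ne_zero (x y : ℝ × ℝ × ℝ) (hx : mulJ25 x x ≠ 0)
    (hy : mulJ25 y y ≠ 0) : mulJ25 x y ≠ 0 := by
  simp_all [mulJ25]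

lemma not_algebrasIso_mulJ24_mulJ25 : ¬ AlgebrasIso mulJ24 mulJ25 := fun h => by
  simpa [mulJ24] using
    h.mul_ne_zero_of_mul_self_ne_zero mulJ25_mul_ne_zero_of_mul_self_ne_zero (1, 0, 0) (0, 1, 0)

lemma not_algebrasIso_mulJ24_mulJ26 : ¬ AlgebrasIso mulJ24 mulJ26 := fun h => by
  simpa [mulJ26] using
    h.symm.mul_eq_zero_of_mul_self_eq_zero mulJ24_mul_eq_zero_of_mul_self_eq_zero
      (1, 0, 0) (by simp [mulJ26]) (0, 1, 0)

lemma not_algebrasIso_mulJ25_mulJ26 : ¬ AlgebrasIso mulJ25 mulJ26 := fun h => by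
  simpa [mulJ26] using
    h.symm.mul_eq_zero_of_mul_self_eq_zero mulJ25_mul_eq_zero_of_mul_self_eq_zero
      (1, 0, 0) (by simp [mulJ26]) (0, 1, 0)

lemma exists_mul_self_mul_eq_one {a : ℝ} (ha : 0 < a) : ∃ c : ℝ, c * c * a = 1 :=
  ⟨(√a)⁻¹, by rw [← mul_inv, Real.mul_self_sqrt ha.le, inv_mul_cancel₀ ha.ne']⟩

lemma Submodule.exists_smul_eq_of_finrank_eq_one {V : Type*} [AddCommGroup V] [Module ℝ V]
    {S : Submodule ℝ V} (hS : finrank ℝ S = 1) {e z : V} (he : e ∈ S) (he₀ : e ≠ 0)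
    (hz : z ∈ S) : ∃ c : ℝ, c • e = z := by
  obtain ⟨c, hc⟩ := (finrank_eq_one_iff_of_nonzero' (⟨e, he⟩ : S) (by simpa using he₀)).1 hS ⟨z, hz⟩
  exact ⟨c, congrArg Subtype.val hc⟩

lemma Module.Dual.exists_ker_notMem_span_singleton {V : Type*} [AddCommGroup V] [Module ℝ V]
    [FiniteDimensional ℝ V] (hV : 2 < finrank ℝ V) {g : Dual ℝ V} (hg : g ≠ 0) (e : V) :
    ∃ w, g w = 0 ∧ w ∉ ℝ ∙ e := by
  by_contra! h
  have hle : LinearMap.ker g ≤ ℝ ∙ e := fun w hw => h w hw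
  have := Submodule.finrank_mono hle
  have := g.finrank_ker_add_one_of_ne_zero hg
  have : finrank ℝ (ℝ ∙ e) ≤ 1 := by simpa using finrank_span_le_card ({e} : Set V)
  omega

section Classification

variable {J : Type*} [AddCommGroup J] [Module ℝ J] (mul : J →ₗ[ℝ] J →ₗ[ℝ] J)
  (comm : ∀ x y, mul x y = mul y x)

include comm in
lemma exists_mul_self_ne_zero (hmul : mul ≠ 0) : ∃ u, mul u u ≠ 0 := by
  by_contra! h
  refine hmul (LinearMap.ext₂ fun x y => ?_)
  have hxy : (2 : ℝ) • mul x y = 0 := by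
    have := h (x + y)
    simp only [map_add, LinearMap.add_apply, h x, h y, comm y x, zero_add, add_zero] at this
    rwa [two_smul]
  simpa using hxy

lemma ne_zero_of_finrank_span_mul_pos
    (h : 0 < finrank ℝ (Submodule.span ℝ {z : J | ∃ x y, z = mul x y})) : mul ≠ 0 := by
  rintro rfl
  have hbot : Submodule.span ℝ {z : J | ∃ x y, z = (0 : J →ₗ[ℝ] J →ₗ[ℝ] J) x y} = ⊥ := by
    rw [Submodule.span_eq_bot]
    rintro z ⟨x, y, rfl⟩
    rfl
  rw [hbot, finrank_bot] at h
  exact h.false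

variable (hdim : finrank ℝ J = 3) (hJ3 : ∀ x y z, mul (mul x y) z = 0) {u w : J}
  (huw : mul u w = 0)
include comm hdim hJ3 huw

lemma isoTo_mulJ25_of_mul_self_eq_zero (hu : mul u u ≠ 0) (hw : w ∉ ℝ ∙ mul u u)
    (hww : mul w w = 0) : IsoTo mul mulJ25 := by
  have hind : LinearIndependent ℝ ![mul u u, w] :=
    (LinearIndependent.pair_iff' hu).2 fun a ha => hw (Submodule.mem_span_singleton.2 ⟨a, ha⟩)
  exact isoTo_mulJ25 mul comm hdim hind rfl (by rw [comm]; exact hJ3 u u u) (hJ3 u u _) huw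
    (hJ3 u u w) hww

lemma isoTo_mulJ24_of_mul_self_eq (hu : mul u u ≠ 0) (hww : mul w w = mul u u) :
    IsoTo mul mulJ24 := by
  have he : ∀ x, mul x (mul u u) = 0 := fun x => by rw [comm]; exact hJ3 u u x
  exact isoTo_mulJ24 mul comm hdim hu rfl huw hww (he u) (he w) (he _)

lemma isoTo_mulJ26_of_mul_self_eq_neg (hu : mul u u ≠ 0) (hww : mul w w = -mul u u) :
    IsoTo mul mulJ26 := by
  have he : ∀ x, mul x ((2 : ℝ) • mul u u) = 0 := fun x => by
    rw [map_smul, comm]; simp [hJ3]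
  refine isoTo_mulJ26 mul comm hdim (u₁ := u + w) (u₂ := u - w) (by simpa using hu) ?_ ?_ ?_
    (he _) (he _) (he _) <;>
  · simp only [map_add, map_sub, LinearMap.add_apply, LinearMap.sub_apply, comm w u, huw, hww]
    module

lemma isoTo_of_mul_eq_smul_mul_self (f : Dual ℝ J)
    (hsq : ∀ x y, mul x y = f (mul x y) • mul u u) (hu : mul u u ≠ 0) (hw : w ∉ ℝ ∙ mul u u) :
    IsoTo mul mulJ24 ∨ IsoTo mul mulJ25 ∨ IsoTo mul mulJ26 := by
  have hww := hsq w w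
  set a := f (mul w w)
  have hscale (c : ℝ) : mul u (c • w) = 0 ∧ mul (c • w) (c • w) = (c * c * a) • mul u u :=
    ⟨by rw [map_smul, huw, smul_zero],
      by rw [map_smul, LinearMap.map_smul₂, hww, smul_smul, smul_smul]⟩
  rcases lt_trichotomy a 0 with hneg | hzero | hpos
  · obtain ⟨c, hc⟩ := exists_mul_self_mul_eq_one (neg_pos.2 hneg)
    refine .inr <| .inr <| isoTo_mulJ26_of_mul_self_eq_neg mul comm hdim hJ3 (hscale c).1 hu ?_
    rw [(hscale c).2, show c * c * a = -1 by linarith, neg_one_smul]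
  · refine .inr <| .inl <| isoTo_mulJ25_of_mul_self_eq_zero mul comm hdim hJ3 huw hu hw ?_
    rw [hww, hzero, zero_smul]
  · obtain ⟨c, hc⟩ := exists_mul_self_mul_eq_one hpos
    refine .inl <| isoTo_mulJ24_of_mul_self_eq mul comm hdim hJ3 (hscale c).1 hu ?_
    rw [(hscale c).2, hc, one_smul]

end Classification

theorem nilpotent_type_21_classification_general
    {J : Type*} [AddCommGroup J] [Module ℝ J] [FiniteDimensional ℝ J]
    (mul : J →ₗ[ℝ] J →ₗ[ℝ] J)
    (comm : ∀ x y : J, mul x y = mul y x)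
    (hdim : Module.finrank ℝ J = 3)
    (hJ3 : ∀ x y z : J, mul (mul x y) z = 0)
    (hJ2 : Module.finrank ℝ ↥(Submodule.span ℝ {z : J | ∃ x y, z = mul x y}) = 1) :
    (IsoTo mul mulJ24 ∨ IsoTo mul mulJ25 ∨ IsoTo mul mulJ26) ∧
    ¬ AlgebrasIso mulJ24 mulJ25 ∧
    ¬ AlgebrasIso mulJ24 mulJ26 ∧
    ¬ AlgebrasIso mulJ25 mulJ26 := by
  refine ⟨?_, not_algebrasIso_mulJ24_mulJ25, not_algebrasIso_mulJ24_mulJ26,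
    not_algebrasIso_mulJ25_mulJ26⟩
  obtain ⟨u, hu⟩ :=
    exists_mul_self_ne_zero mul comm (ne_zero_of_finrank_span_mul_pos mul (by omega))
  obtain ⟨f, hf⟩ := Module.Projective.exists_dual_eq_one ℝ hu
  have hsq (x y : J) : mul x y = f (mul x y) • mul u u := by
    obtain ⟨c, hc⟩ := Submodule.exists_smul_eq_of_finrank_eq_one hJ2
      (Submodule.subset_span ⟨u, u, rfl⟩) hu (Submodule.subset_span ⟨x, y, rfl⟩)
    rw [← hc, map_smul, hf, smul_eq_mul, mul_one]
  have hg : f ∘ₗ mul u ≠ 0 := fun h => by simpa [hf] using LinearMap.congr_fun h u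
  obtain ⟨w, hfuw, hw⟩ := Module.Dual.exists_ker_notMem_span_singleton (by omega) hg (mul u u)
  have huw : mul u w = 0 := by rw [hsq, show f (mul u w) = 0 from hfuw, zero_smul]
  exact isoTo_of_mul_eq_smul_mul_self mul comm hdim hJ3 huw f hsq hu hw

/-- every 3-dimensional nilpotent commutative real Jordan algebra
of nilpotency type (2,1) (J³ = 0, dim J² = 1) is isomorphic to exactly one of
J₂₄, J₂₅, J₂₆; in particular these three are pairwise non-isomorphic. -/
theorem nilpotent_type_21_classification
    {J : Type*} [AddCommGroup J] [Module ℝ J] [FiniteDimensional ℝ J]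
    (mul : J →ₗ[ℝ] J →ₗ[ℝ] J)
    (comm : ∀ x y : J, mul x y = mul y x)
    (jordan : ∀ x y : J, mul (mul (mul x x) y) x = mul (mul x x) (mul y x))
    (hdim : Module.finrank ℝ J = 3)
    (hJ3 : ∀ x y z : J, mul (mul x y) z = 0)
    (hJ2 : Module.finrank ℝ ↥(Submodule.span ℝ {z : J | ∃ x y, z = mul x y}) = 1) :
    (IsoTo mul mulJ24 ∨ IsoTo mul mulJ25 ∨ IsoTo mul mulJ26) ∧
    ¬ AlgebrasIso mulJ24 mulJ25 ∧
    ¬ AlgebrasIso mulJ24 mulJ26 ∧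
    ¬ AlgebrasIso mulJ25 mulJ26 :=
  nilpotent_type_21_classification_general mul comm hdim hJ3 hJ2
end
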